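/- arXiv:1501.02143 — 2 statements merged into one kernel-verified Lean document; each statement's English description precedes it below -/
import Mathlib

section
/- Let l_1,l_2,l_3,u_1,u_2,u_3,u_4 ∈ (0,1] and let t* ∈ [0, ε·min(l_1,l_2,l_3,u_1,...,u_4)] for some ε ∈ (0, 1/2] satisfy (l_1+t*)(l_2+t*)(l_3+t*)·t* = (u_1−t*)(u_2−t*)(u_3−t*)(u_4−t*). Define t̃ = u_1 u_2 u_3 u_4 / (l_1 l_2 l_3). Then (1 − 6.5ε)·t̃ ≤ t* ≤ t̃. -/
/-!
Put `xᵢ = t/lᵢ`, `yⱼ = t/uⱼ`, both in `[0, ε]`, and `r = t·l₁l₂l₃/(u₁u₂u₃u₄)`; the claim is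
`1 - 13ε/2 ≤ r ≤ 1`. The balance equation reads `r·∏(1 + xᵢ) = ∏(1 - yⱼ)`, and trivially
`r·∏xᵢ = ∏yⱼ`. The upper bound is immediate. For the lower bound, comparing with the exponential
gives `(1 - Σxᵢ)·∏(1 + xᵢ) ≤ 1`, hence `r ≥ (1 - 4ε)(1 - Σxᵢ)`, which suffices when `Σxᵢ ≤ 5ε/2`.
Otherwise at least two of the `xᵢ` are close to `ε`, so `∏xᵢ ≥ ε³/2` and `r = ∏yⱼ/∏xᵢ ≤ 2ε`,
while `r ≥ (1 - ε)⁴/(1 + ε)³`; together these force `ε ≥ 2/13`, where the bound is trivial.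
-/

open Finset Real

section ProductBounds

variable {ι R : Type*} [CommMonoidWithZero R] [Preorder R] [ZeroLEOneClass R] [PosMulMono R]
  {s : Finset ι} {f : ι → R} {a : R}

lemma pow_card_le_prod_of_le (ha : 0 ≤ a) (h : ∀ i ∈ s, a ≤ f i) : a ^ #s ≤ ∏ i ∈ s, f i := by
  simpa using prod_le_prod (fun _ _ ↦ ha) h

lemma prod_le_pow_card_of_le (h₀ : ∀ i ∈ s, 0 ≤ f i) (h : ∀ i ∈ s, f i ≤ a) :
    ∏ i ∈ s, f i ≤ a ^ #s := by
  simpa using prod_le_prod h₀ h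

end ProductBounds

lemma one_sub_sum_mul_prod_one_add_le_one {ι : Type*} (s : Finset ι) {x : ι → ℝ}
    (hx : ∀ i, 0 ≤ x i) : (1 - ∑ i ∈ s, x i) * ∏ i ∈ s, (1 + x i) ≤ 1 := by
  set S := ∑ i ∈ s, x i
  have hprod : 0 ≤ ∏ i ∈ s, (1 + x i) := prod_nonneg fun i _ ↦ by linarith [hx i]
  rcases lt_or_ge (1 - S) 0 with hneg | hnonneg
  · exact (mul_nonpos_of_nonpos_of_nonneg hneg.le hprod).trans zero_le_one
  · calc (1 - S) * ∏ i ∈ s, (1 + x i) ≤ exp (-S) * exp S := by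
          gcongr
          · linarith [add_one_le_exp (-S)]
          · exact prod_one_add_le_exp_sum s hx
      _ = 1 := by rw [← exp_add, neg_add_cancel, exp_zero]

lemma sq_mul_sum_sub_le_prod_fin_three {ε : ℝ} {x : Fin 3 → ℝ} (hx : ∀ i, x i ∈ Set.Icc 0 ε) :
    ε ^ 2 * (∑ i, x i - 2 * ε) ≤ ∏ i, x i := by
  obtain ⟨h₁, h₁'⟩ := hx 0
  obtain ⟨h₂, h₂'⟩ := hx 1
  obtain ⟨h₃, h₃'⟩ := hx 2
  simp only [Fin.sum_univ_three, Fin.prod_univ_three]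
  -- the difference is (ε - x₀)(ε - x₁)x₂ + ε(ε - x₂)(2ε - x₀ - x₁)
  nlinarith [mul_nonneg (mul_nonneg (sub_nonneg.2 h₁') (sub_nonneg.2 h₂')) h₃,
    mul_nonneg (mul_nonneg (h₁.trans h₁') (sub_nonneg.2 h₃'))
      (by linarith : 0 ≤ 2 * ε - x 0 - x 1)]

lemma le_one_of_mul_prod_one_add_eq_prod_one_sub {ι κ : Type*} {s : Finset ι} {t : Finset κ}
    {x : ι → ℝ} {y : κ → ℝ} {r : ℝ} (hx : ∀ i ∈ s, 0 ≤ x i) (hy : ∀ j ∈ t, y j ∈ Set.Icc 0 1)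
    (h : r * ∏ i ∈ s, (1 + x i) = ∏ j ∈ t, (1 - y j)) : r ≤ 1 := by
  have hP : 1 ≤ ∏ i ∈ s, (1 + x i) := by
    simpa using pow_card_le_prod_of_le (f := fun i ↦ 1 + x i) zero_le_one
      fun i hi ↦ by linarith [hx i hi]
  have hQ : ∏ j ∈ t, (1 - y j) ≤ 1 :=
    prod_le_one (fun j hj ↦ by linarith [(hy j hj).2]) fun j hj ↦ by linarith [(hy j hj).1]
  exact le_of_mul_le_mul_right (by linarith : r * ∏ i ∈ s, (1 + x i) ≤ 1 * ∏ i ∈ s, (1 + x i))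
    (by linarith)

lemma one_sub_le_of_mul_prod_one_add_eq_prod_one_sub {ε r : ℝ} {x : Fin 3 → ℝ} {y : Fin 4 → ℝ}
    (hε : 0 < ε) (hx : ∀ i, x i ∈ Set.Icc 0 ε) (hy : ∀ j, y j ∈ Set.Icc 0 ε) (hr : 0 ≤ r)
    (hbal : r * ∏ i, (1 + x i) = ∏ j, (1 - y j)) (hprod : r * ∏ i, x i = ∏ j, y j) :
    1 - 13 / 2 * ε ≤ r := by
  rcases le_or_gt (2 / 13) ε with hlarge | hsmall
  · linarith
  have hY : (1 - ε) ^ 4 ≤ ∏ j, (1 - y j) := by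
    simpa using pow_card_le_prod_of_le (s := univ) (f := fun j ↦ 1 - y j) (a := 1 - ε)
      (by linarith) fun j _ ↦ by linarith [(hy j).2]
  rcases le_or_gt (∑ i, x i) (5 / 2 * ε) with hσ | hσ
  · have hbern : 1 - 4 * ε ≤ (1 - ε) ^ 4 := by
      simpa [sub_eq_add_neg] using one_add_mul_le_pow (a := -ε) (by linarith) 4
    calc 1 - 13 / 2 * ε ≤ (1 - 5 / 2 * ε) * (1 - 4 * ε) := by nlinarith
      _ ≤ (1 - ∑ i, x i) * ∏ j, (1 - y j) := by gcongr <;> linarith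
      _ = r * ((1 - ∑ i, x i) * ∏ i, (1 + x i)) := by rw [← hbal]; ring
      _ ≤ r := mul_le_of_le_one_right hr
          (one_sub_sum_mul_prod_one_add_le_one _ fun i ↦ (hx i).1)
  · have hX : ε ^ 3 / 2 ≤ ∏ i, x i := by
      nlinarith [sq_mul_sum_sub_le_prod_fin_three hx, sq_pos_of_pos hε]
    have hY' : ∏ j, y j ≤ ε ^ 4 := by
      simpa using prod_le_pow_card_of_le (s := univ) (fun j _ ↦ (hy j).1) fun j _ ↦ (hy j).2
    have hr2 : r ≤ 2 * ε := by
      have : r * (ε ^ 3 / 2) ≤ (2 * ε) * (ε ^ 3 / 2) := by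
        nlinarith [mul_le_mul_of_nonneg_left hX hr]
      exact le_of_mul_le_mul_right this (by positivity)
    have hX' : ∏ i, (1 + x i) ≤ (1 + ε) ^ 3 := by
      simpa using prod_le_pow_card_of_le (s := univ) (f := fun i ↦ 1 + x i) (a := 1 + ε)
        (fun i _ ↦ by linarith [(hx i).1]) fun i _ ↦ by linarith [(hx i).2]
    have : (1 - ε) ^ 4 ≤ 2 * ε * (1 + ε) ^ 3 :=
      calc (1 - ε) ^ 4 ≤ r * ∏ i, (1 + x i) := hbal ▸ hY
        _ ≤ 2 * ε * (1 + ε) ^ 3 := by gcongr; exact prod_nonneg fun i _ ↦ by linarith [(hx i).1]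
    nlinarith [pow_pos hε 2, pow_pos hε 3, pow_pos hε 4]

theorem maxent_triple_estimate_general (l₁ l₂ l₃ u₁ u₂ u₃ u₄ ε t : ℝ)
    (hl₁ : 0 < l₁) (hl₂ : 0 < l₂) (hl₃ : 0 < l₃)
    (hu₁ : 0 < u₁) (hu₂ : 0 < u₂) (hu₃ : 0 < u₃) (hu₄ : 0 < u₄)
    (hε : 0 < ε) (hε' : ε ≤ 1 / 2)
    (ht : 0 ≤ t)
    (ht' : t ≤ ε * min l₁ (min l₂ (min l₃ (min u₁ (min u₂ (min u₃ u₄))))))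
    (hbal : (l₁ + t) * (l₂ + t) * (l₃ + t) * t = (u₁ - t) * (u₂ - t) * (u₃ - t) * (u₄ - t)) :
    (1 - (13 / 2) * ε) * (u₁ * u₂ * u₃ * u₄ / (l₁ * l₂ * l₃)) ≤ t ∧
      t ≤ u₁ * u₂ * u₃ * u₄ / (l₁ * l₂ * l₃) := by
  simp only [mul_min_of_nonneg _ _ hε.le, le_min_iff] at ht'
  obtain ⟨b₁, b₂, b₃, c₁, c₂, c₃, c₄⟩ := ht'
  have hdiv {a : ℝ} (ha : 0 < a) (h : t ≤ ε * a) : t / a ∈ Set.Icc 0 ε :=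
    ⟨by positivity, div_le_of_le_mul₀ ha.le hε.le h⟩
  set x : Fin 3 → ℝ := ![t / l₁, t / l₂, t / l₃]
  set y : Fin 4 → ℝ := ![t / u₁, t / u₂, t / u₃, t / u₄]
  have hx : ∀ i, x i ∈ Set.Icc 0 ε := by
    intro i; fin_cases i
    exacts [hdiv hl₁ b₁, hdiv hl₂ b₂, hdiv hl₃ b₃]
  have hy : ∀ j, y j ∈ Set.Icc 0 ε := by
    intro j; fin_cases j
    exacts [hdiv hu₁ c₁, hdiv hu₂ c₂, hdiv hu₃ c₃, hdiv hu₄ c₄]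
  set r := t * (l₁ * l₂ * l₃) / (u₁ * u₂ * u₃ * u₄)
  have hbal' : r * ∏ i, (1 + x i) = ∏ j, (1 - y j) := by
    simp only [r, x, y, Fin.prod_univ_three, Fin.prod_univ_four, Fin.isValue, Matrix.cons_val_zero,
      Matrix.cons_val_one, Matrix.cons_val]
    field_simp
    linear_combination hbal
  have hprod : r * ∏ i, x i = ∏ j, y j := by
    simp only [r, x, y, Fin.prod_univ_three, Fin.prod_univ_four, Fin.isValue, Matrix.cons_val_zero,
      Matrix.cons_val_one, Matrix.cons_val]
    field_simp
  have hr_le := le_one_of_mul_prod_one_add_eq_prod_one_sub (fun i _ ↦ (hx i).1)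
    (fun j _ ↦ ⟨(hy j).1, (hy j).2.trans (by linarith)⟩) hbal'
  have hr_ge := one_sub_le_of_mul_prod_one_add_eq_prod_one_sub hε hx hy (by positivity) hbal' hprod
  have hrt : r * (u₁ * u₂ * u₃ * u₄ / (l₁ * l₂ * l₃)) = t := by
    simp only [r]; field_simp
  constructor
  · rw [← hrt]; gcongr
  · calc t = r * (u₁ * u₂ * u₃ * u₄ / (l₁ * l₂ * l₃)) := hrt.symm
      _ ≤ u₁ * u₂ * u₃ * u₄ / (l₁ * l₂ * l₃) := mul_le_of_le_one_left (by positivity) hr_le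

/-- If `t*` solves the maximum-entropy balance equation
`(l₁+t)(l₂+t)(l₃+t)·t = (u₁−t)(u₂−t)(u₃−t)(u₄−t)` and
`0 ≤ t* ≤ ε·min(l₁,l₂,l₃,u₁,…,u₄)` for some `ε ∈ (0,1/2]`, then with
`t̃ = u₁u₂u₃u₄/(l₁l₂l₃)` we have `(1 − 6.5ε)·t̃ ≤ t* ≤ t̃`. -/
theorem maxent_triple_estimate (l₁ l₂ l₃ u₁ u₂ u₃ u₄ ε t : ℝ)
    (hl₁ : 0 < l₁) (hl₁' : l₁ ≤ 1) (hl₂ : 0 < l₂) (hl₂' : l₂ ≤ 1)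
    (hl₃ : 0 < l₃) (hl₃' : l₃ ≤ 1)
    (hu₁ : 0 < u₁) (hu₁' : u₁ ≤ 1) (hu₂ : 0 < u₂) (hu₂' : u₂ ≤ 1)
    (hu₃ : 0 < u₃) (hu₃' : u₃ ≤ 1) (hu₄ : 0 < u₄) (hu₄' : u₄ ≤ 1)
    (hε : 0 < ε) (hε' : ε ≤ 1 / 2)
    (ht : 0 ≤ t)
    (ht' : t ≤ ε * min l₁ (min l₂ (min l₃ (min u₁ (min u₂ (min u₃ u₄))))))
    (hbal : (l₁ + t) * (l₂ + t) * (l₃ + t) * t = (u₁ - t) * (u₂ - t) * (u₃ - t) * (u₄ - t)) :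
    (1 - (13 / 2) * ε) * (u₁ * u₂ * u₃ * u₄ / (l₁ * l₂ * l₃)) ≤ t ∧
      t ≤ u₁ * u₂ * u₃ * u₄ / (l₁ * l₂ * l₃) :=
  maxent_triple_estimate_general l₁ l₂ l₃ u₁ u₂ u₃ u₄ ε t hl₁ hl₂ hl₃ hu₁ hu₂ hu₃ hu₄ hε hε' ht ht'
    hbal
end

section
/- If a distribution p on {0,1}^3 has all eight atoms positive and satisfies the balance equation Pr(XYW̄)·Pr(XȲW)·Pr(X̄YW)·Pr(X̄ȲW̄) = Pr(XȲW̄)·Pr(X̄YW̄)·Pr(X̄ȲW)·Pr(XYW), then p is the unique maximizer of entropy among all distributions on {0,1}^3 with the same singleton and pairwise marginals and all atoms positive. -/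
/-!
Fixing the total mass and the singleton and pairwise marginals of a distribution on `{0,1}³`
leaves one degree of freedom: `q = p + t • v` with `v = ±1` the parity character. Hence
`H(p) - H(q) = KL(q ‖ p) + t · ∑ v log p`, and taking logarithms in the balance equation gives
exactly `∑ v log p = 0`, i.e. `p` is the stationary point of the entropy on this line.
Gibbs' inequality `KL(q ‖ p) > 0` for `q ≠ p` finishes the proof.
-/

/-- Shannon entropy of a distribution on `{0,1}³`. -/
noncomputable def entropy3 (p : Bool → Bool → Bool → ℝ) : ℝ :=
  -∑ x : Bool, ∑ y : Bool, ∑ w : Bool, p x y w * Real.log (p x y w)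

open Real InformationTheory

lemma sub_lt_mul_log_sub_mul_log {a b : ℝ} (ha : 0 < a) (hb : 0 < b) (hab : b ≠ a) :
    b - a < b * log b - b * log a := by
  have hkl : 0 < klFun (b / a) :=
    (klFun_nonneg (div_pos hb ha).le).lt_of_ne' fun h =>
      hab ((div_eq_one_iff_eq ha.ne').1 ((klFun_eq_zero_iff (div_pos hb ha).le).1 h))
  have hid : a * klFun (b / a) = b * log b - b * log a - (b - a) := by
    rw [klFun_apply, log_div hb.ne' ha.ne']
    field_simp
    ring
  nlinarith [mul_pos ha hkl]

lemma sub_le_mul_log_sub_mul_log {a b : ℝ} (ha : 0 < a) (hb : 0 < b) :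
    b - a ≤ b * log b - b * log a := by
  rcases eq_or_ne b a with rfl | hab
  · simp
  · exact (sub_lt_mul_log_sub_mul_log ha hb hab).le

theorem sum_mul_log_lt_sum_mul_log {ι : Type*} [Fintype ι] {p q : ι → ℝ}
    (hp : ∀ i, 0 < p i) (hq : ∀ i, 0 < q i) (hsum : ∑ i, q i = ∑ i, p i) (hne : q ≠ p) :
    ∑ i, q i * log (p i) < ∑ i, q i * log (q i) := by
  obtain ⟨j, hj⟩ := Function.ne_iff.1 hne
  have key : ∑ i, (q i - p i) < ∑ i, (q i * log (q i) - q i * log (p i)) :=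
    Finset.sum_lt_sum (fun i _ => sub_le_mul_log_sub_mul_log (hp i) (hq i))
      ⟨j, Finset.mem_univ j, sub_lt_mul_log_sub_mul_log (hp j) (hq j) hj⟩
  rw [Finset.sum_sub_distrib, Finset.sum_sub_distrib, hsum, sub_self] at key
  linarith

theorem entropy3_lt_of_sum_mul_log_eq {p q : Bool → Bool → Bool → ℝ}
    (hp : ∀ x y w, 0 < p x y w) (hq : ∀ x y w, 0 < q x y w)
    (hsum : ∑ x, ∑ y, ∑ w, q x y w = ∑ x, ∑ y, ∑ w, p x y w) (hne : q ≠ p)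
    (hcross : ∑ x, ∑ y, ∑ w, q x y w * log (p x y w) =
      ∑ x, ∑ y, ∑ w, p x y w * log (p x y w)) :
    entropy3 q < entropy3 p := by
  have hgibbs := sum_mul_log_lt_sum_mul_log (p := fun i : Bool × Bool × Bool => p i.1 i.2.1 i.2.2)
    (q := fun i => q i.1 i.2.1 i.2.2) (fun _ => hp _ _ _) (fun _ => hq _ _ _)
    (by simpa only [Fintype.sum_prod_type] using hsum)
    (fun h => hne (funext₃ fun x y w => congrFun h (x, y, w)))
  simp only [Fintype.sum_prod_type] at hgibbs
  unfold entropy3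
  linarith

/-- The sign vector `v_S = (-1)^(3 - |S|)` is `boolSign x * boolSign y * boolSign w`,
with `S` the set of `true` coordinates. -/
def boolSign (b : Bool) : ℝ := if b then 1 else -1

theorem eq_add_mul_boolSign_of_marginals_eq {p q : Bool → Bool → Bool → ℝ}
    (hsum : ∑ x, ∑ y, ∑ w, q x y w = ∑ x, ∑ y, ∑ w, p x y w)
    (h1 : (∑ y, ∑ w, q true y w) = (∑ y, ∑ w, p true y w))
    (h2 : (∑ x, ∑ w, q x true w) = (∑ x, ∑ w, p x true w))
    (h3 : (∑ x, ∑ y, q x y true) = (∑ x, ∑ y, p x y true))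
    (h12 : (∑ w, q true true w) = (∑ w, p true true w))
    (h13 : (∑ y, q true y true) = (∑ y, p true y true))
    (h23 : (∑ x, q x true true) = (∑ x, p x true true)) :
    ∃ t : ℝ, ∀ x y w, q x y w = p x y w + t * (boolSign x * boolSign y * boolSign w) := by
  simp only [Fintype.sum_bool] at hsum h1 h2 h3 h12 h13 h23
  refine ⟨q true true true - p true true true, fun x y w => ?_⟩
  cases x <;> cases y <;> cases w <;> simp only [boolSign] <;> norm_num <;> linarith

theorem sum_boolSign_mul_log_eq_zero {p : Bool → Bool → Bool → ℝ}
    (hpos : ∀ x y w, 0 < p x y w)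
    (hbal : p true true false * p true false true * p false true true * p false false false =
      p true false false * p false true false * p false false true * p true true true) :
    ∑ x, ∑ y, ∑ w, boolSign x * boolSign y * boolSign w * log (p x y w) = 0 := by
  have hlog := congrArg log hbal
  simp only [log_mul, mul_ne_zero_iff, ne_eq, (hpos _ _ _).ne', not_false_eq_true, and_self] at hlog
  simp only [Fintype.sum_bool, boolSign]
  norm_num
  linarith

theorem sum_mul_log_eq_of_balance {p q : Bool → Bool → Bool → ℝ} {t : ℝ}
    (hpos : ∀ x y w, 0 < p x y w)
    (hbal : p true true false * p true false true * p false true true * p false false false =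
      p true false false * p false true false * p false false true * p true true true)
    (hline : ∀ x y w, q x y w = p x y w + t * (boolSign x * boolSign y * boolSign w)) :
    ∑ x, ∑ y, ∑ w, q x y w * log (p x y w) = ∑ x, ∑ y, ∑ w, p x y w * log (p x y w) := by
  have hstat := sum_boolSign_mul_log_eq_zero hpos hbal
  simp only [Fintype.sum_bool] at hstat ⊢
  simp only [hline]
  linear_combination t * hstat

/-- If a distribution on `{0,1}³` has all eight atoms positive and satisfies the
balance equation
`Pr(XYW̄)·Pr(XȲW)·Pr(X̄YW)·Pr(X̄ȲW̄) = Pr(XȲW̄)·Pr(X̄YW̄)·Pr(X̄ȲW)·Pr(XYW)`,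
then it is the unique entropy maximizer among all positive distributions with the
same singleton and pairwise marginals. -/
theorem balance_implies_unique_maxent (p : Bool → Bool → Bool → ℝ)
    (hpos : ∀ x y w, 0 < p x y w)
    (hsum : ∑ x : Bool, ∑ y : Bool, ∑ w : Bool, p x y w = 1)
    (hbal : p true true false * p true false true * p false true true * p false false false =
      p true false false * p false true false * p false false true * p true true true) :
    ∀ q : Bool → Bool → Bool → ℝ,
      (∀ x y w, 0 < q x y w) →
      (∑ x : Bool, ∑ y : Bool, ∑ w : Bool, q x y w = 1) →
      (∑ y : Bool, ∑ w : Bool, q true y w) = (∑ y : Bool, ∑ w : Bool, p true y w) →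
      (∑ x : Bool, ∑ w : Bool, q x true w) = (∑ x : Bool, ∑ w : Bool, p x true w) →
      (∑ x : Bool, ∑ y : Bool, q x y true) = (∑ x : Bool, ∑ y : Bool, p x y true) →
      (∑ w : Bool, q true true w) = (∑ w : Bool, p true true w) →
      (∑ y : Bool, q true y true) = (∑ y : Bool, p true y true) →
      (∑ x : Bool, q x true true) = (∑ x : Bool, p x true true) →
      q ≠ p →
      entropy3 q < entropy3 p := by
  intro q hq hqsum h1 h2 h3 h12 h13 h23 hne
  have hsum_eq : ∑ x, ∑ y, ∑ w, q x y w = ∑ x, ∑ y, ∑ w, p x y w := hqsum.trans hsum.symm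
  obtain ⟨t, hline⟩ := eq_add_mul_boolSign_of_marginals_eq hsum_eq h1 h2 h3 h12 h13 h23
  exact entropy3_lt_of_sum_mul_log_eq hpos hq hsum_eq hne
    (sum_mul_log_eq_of_balance hpos hbal hline)
end
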